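/- Let A and B be finite types and let ψ₀, ψ₁ : A × B → ℂ be unit vectors. If their partial traces over A are equal, ptrA ψ₀ = ptrA ψ₁, then there exists a unitary matrix S ∈ Matrix.unitaryGroup A ℂ such that (S ⊗ I).mulVec ψ₀ = ψ₁. (Gisin–Hughston–Jozsa–Wootters theorem: any two purifications, over the same auxiliary system A, of the same density matrix on B are related by a unitary acting on A alone.) -/

import Mathlib

open scoped ComplexOrder
open Matrix

noncomputable section

/-- Partial trace over `A` of the outer product `|ψ⟩⟨ψ|`:
`(ptrA ψ) j q = ∑ i, ψ (i, j) * conj (ψ (i, q))`. -/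
def ptrA {A B : Type*} [Fintype A] (ψ : A × B → ℂ) : Matrix B B ℂ :=
  fun j q => ∑ i : A, ψ (i, j) * (starRingEnd ℂ) (ψ (i, q))

/-- The Kronecker product `S ⊗ I` with the identity on `B`, as a matrix on `A × B`. -/
def kronId {A B : Type*} [DecidableEq B] (S : Matrix A A ℂ) : Matrix (A × B) (A × B) ℂ :=
  Matrix.kroneckerMap (· * ·) S (1 : Matrix B B ℂ)

/-- `ptrA ψ` is a Gram matrix, hence positive semidefinite. -/
lemma ptrA_posSemidef {A B : Type*} [Fintype A] [Fintype B] (ψ : A × B → ℂ) :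
    (ptrA ψ).PosSemidef := by
  set V : Matrix A B ℂ := Matrix.of fun i j => (starRingEnd ℂ) (ψ (i, j)) with hV
  have h := Matrix.posSemidef_conjTranspose_mul_self V
  have heq : ptrA ψ = Vᴴ * V := by
    ext j q
    simp [Matrix.mul_apply, Matrix.conjTranspose_apply, ptrA, hV, mul_comm]
  rw [heq]; exact h

namespace Matrix.PosSemidef

/-- The square root of a positive semidefinite matrix, as `Matrix.PosSemidef.sqrt` was
defined in Mathlib of December 2024 (since removed). -/
noncomputable def sqrt {n 𝕜 : Type*} [Fintype n] [RCLike 𝕜] [DecidableEq n]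
    {A : Matrix n n 𝕜} (hA : A.PosSemidef) : Matrix n n 𝕜 :=
  hA.1.eigenvectorUnitary.1 * diagonal ((↑) ∘ Real.sqrt ∘ hA.1.eigenvalues) *
  (star hA.1.eigenvectorUnitary : Matrix n n 𝕜)

lemma posSemidef_sqrt {n 𝕜 : Type*} [Fintype n] [RCLike 𝕜] [DecidableEq n]
    {A : Matrix n n 𝕜} (hA : A.PosSemidef) : PosSemidef hA.sqrt := by
  have hD : (diagonal ((↑) ∘ Real.sqrt ∘ hA.1.eigenvalues) : Matrix n n 𝕜).PosSemidef := by
    refine posSemidef_diagonal_iff.mpr fun i => ?_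
    rw [Function.comp_apply, RCLike.nonneg_iff]
    constructor
    · simp only [RCLike.ofReal_re]; exact Real.sqrt_nonneg _
    · simp only [RCLike.ofReal_im]
  convert hD.mul_mul_conjTranspose_same (hA.1.eigenvectorUnitary : Matrix n n 𝕜) using 1
  simp [sqrt, Matrix.star_eq_conjTranspose]

end Matrix.PosSemidef

lemma sqrt_mul_mul_sqrt_posSemidef {B : Type*} [Fintype B] [DecidableEq B]
    {ρ σ : Matrix B B ℂ} (hρ : ρ.PosSemidef) (hσ : σ.PosSemidef) :
    (hρ.sqrt * σ * hρ.sqrt).PosSemidef := by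
  have h := hσ.mul_mul_conjTranspose_same hρ.sqrt
  rwa [hρ.posSemidef_sqrt.isHermitian.eq] at h

/-- The fidelity `F(ρ, σ) = tr √(√ρ * σ * √ρ)` of two positive semidefinite matrices. -/
def fidelity {B : Type*} [Fintype B] [DecidableEq B] {ρ σ : Matrix B B ℂ}
    (hρ : ρ.PosSemidef) (hσ : σ.PosSemidef) : ℝ :=
  ((sqrt_mul_mul_sqrt_posSemidef hρ hσ).sqrt.trace).re

/-!
Writing `ψ = vec X` for a matrix `X : Matrix B A ℂ`, the partial trace is `X * Xᴴ` and `S ⊗ I`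
acts by `X ↦ X * Sᵀ`. So the claim is that two matrices with the same Gram matrix `X * Xᴴ` differ
by a unitary factor on the right. On the column side, `Mᴴ * M` determines the norms `‖M x‖`, so
`M₀ x ↦ M₁ x` is a well-defined isometry from the range of `M₀`, and any isometry between
subspaces of a finite-dimensional inner product space extends to a unitary of the whole space.
-/

open scoped InnerProductSpace

theorem LinearMap.exists_linearIsometry_comp_eq_of_norm_eq {𝕜 E F : Type*} [RCLike 𝕜]
    [AddCommGroup E] [Module 𝕜 E] [NormedAddCommGroup F] [InnerProductSpace 𝕜 F]
    [FiniteDimensional 𝕜 F] {T₀ T₁ : E →ₗ[𝕜] F} (h : ∀ x, ‖T₀ x‖ = ‖T₁ x‖) :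
    ∃ U : F →ₗᵢ[𝕜] F, U.toLinearMap ∘ₗ T₀ = T₁ := by
  have hker : ker T₀ ≤ ker T₁ := fun x hx => by
    rw [mem_ker, ← norm_eq_zero] at hx ⊢
    rwa [← h x]
  let f : range T₀ →ₗ[𝕜] F := (ker T₀).liftQ T₁ hker ∘ₗ T₀.quotKerEquivRange.symm.toLinearMap
  have hf : ∀ x, f ⟨T₀ x, mem_range_self T₀ x⟩ = T₁ x := fun x => by
    simp only [f, comp_apply, LinearEquiv.coe_coe, quotKerEquivRange_symm_apply_image,
      Submodule.mkQ_apply, Submodule.liftQ_apply]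
  obtain ⟨L, hL⟩ : ∃ L : range T₀ →ₗᵢ[𝕜] F, ∀ x, L ⟨T₀ x, mem_range_self T₀ x⟩ = T₁ x :=
    ⟨⟨f, by rintro ⟨_, x, rfl⟩; rw [hf x]; exact (h x).symm⟩, hf⟩
  exact ⟨L.extend, ext fun x => (L.extend_apply _).trans (hL x)⟩

namespace Matrix

variable {𝕜 m n : Type*} [RCLike 𝕜] [Fintype m] [Fintype n] [DecidableEq m] [DecidableEq n]

theorem toEuclideanLin_symm_mem_unitaryGroup
    (U : EuclideanSpace 𝕜 n →ₗᵢ[𝕜] EuclideanSpace 𝕜 n) :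
    toEuclideanLin.symm U.toLinearMap ∈ unitaryGroup n 𝕜 := by
  rw [mem_unitaryGroup_iff']
  apply toEuclideanLin.injective
  rw [star_eq_conjTranspose, toLpLin_mul_same, toEuclideanLin_conjTranspose_eq_adjoint,
    LinearEquiv.apply_symm_apply, LinearIsometry.adjoint_comp_self', toLpLin_one]

theorem inner_toEuclideanLin_toEuclideanLin (M : Matrix m n 𝕜) (x y : EuclideanSpace 𝕜 n) :
    ⟪toEuclideanLin M x, toEuclideanLin M y⟫_𝕜 = ⟪x, toEuclideanLin (Mᴴ * M) y⟫_𝕜 := by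
  rw [toLpLin_mul_same, LinearMap.comp_apply, toEuclideanLin_conjTranspose_eq_adjoint,
    LinearMap.adjoint_inner_right]

theorem exists_unitary_mul_eq_of_conjTranspose_mul_self_eq {M₀ M₁ : Matrix m n 𝕜}
    (h : M₀ᴴ * M₀ = M₁ᴴ * M₁) : ∃ U ∈ unitaryGroup m 𝕜, U * M₀ = M₁ := by
  have hnorm : ∀ x, ‖toEuclideanLin M₀ x‖ = ‖toEuclideanLin M₁ x‖ := fun x => by
    rw [@norm_eq_sqrt_re_inner 𝕜, @norm_eq_sqrt_re_inner 𝕜, inner_toEuclideanLin_toEuclideanLin,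
      inner_toEuclideanLin_toEuclideanLin, h]
  obtain ⟨U, hU⟩ := LinearMap.exists_linearIsometry_comp_eq_of_norm_eq hnorm
  refine ⟨_, toEuclideanLin_symm_mem_unitaryGroup U, toEuclideanLin.injective ?_⟩
  rw [toLpLin_mul_same, LinearEquiv.apply_symm_apply, hU]

theorem exists_mul_unitary_eq_of_self_mul_conjTranspose_eq {X₀ X₁ : Matrix m n 𝕜}
    (h : X₀ * X₀ᴴ = X₁ * X₁ᴴ) : ∃ V ∈ unitaryGroup n 𝕜, X₀ * V = X₁ := by
  obtain ⟨U, hU, hUX⟩ :=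
    exists_unitary_mul_eq_of_conjTranspose_mul_self_eq (M₀ := X₀ᴴ) (M₁ := X₁ᴴ) (by simpa using h)
  refine ⟨star U, Unitary.star_mem hU, ?_⟩
  simpa [star_eq_conjTranspose] using congrArg conjTranspose hUX

end Matrix

theorem ptrA_vec {A B : Type*} [Fintype A] (X : Matrix B A ℂ) : ptrA (vec X) = X * Xᴴ := by
  ext j q
  simp [ptrA, mul_apply]

theorem kronId_mulVec_vec {A B : Type*} [Fintype A] [Fintype B] [DecidableEq B]
    (S : Matrix A A ℂ) (X : Matrix B A ℂ) : kronId S *ᵥ vec X = vec (X * Sᵀ) := by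
  rw [kronId, kronecker_mulVec_vec, Matrix.one_mul]

theorem ghjw_purifications_related_by_local_unitary_general
    {A B : Type*} [Fintype A] [Fintype B] [DecidableEq A] [DecidableEq B]
    (ψ₀ ψ₁ : A × B → ℂ)
    (h : ptrA ψ₀ = ptrA ψ₁) :
    ∃ S ∈ Matrix.unitaryGroup A ℂ, (kronId S).mulVec ψ₀ = ψ₁ := by
  obtain ⟨X₀, rfl⟩ := vec_bijective.surjective ψ₀
  obtain ⟨X₁, rfl⟩ := vec_bijective.surjective ψ₁
  rw [ptrA_vec, ptrA_vec] at h
  obtain ⟨V, hV, hXV⟩ := exists_mul_unitary_eq_of_self_mul_conjTranspose_eq h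
  refine ⟨Vᵀ, transpose_mem_unitaryGroup_iff.mpr hV, ?_⟩
  rw [kronId_mulVec_vec, transpose_transpose, hXV]

/-- **Gisin–Hughston–Jozsa–Wootters theorem.** Any two purifications over the same
auxiliary system `A` of the same density matrix on `B` are related by a unitary
acting on `A` alone. -/
theorem ghjw_purifications_related_by_local_unitary
    {A B : Type*} [Fintype A] [Fintype B] [DecidableEq A] [DecidableEq B]
    (ψ₀ ψ₁ : A × B → ℂ)
    (h₀ : ∑ k : A × B, (starRingEnd ℂ) (ψ₀ k) * ψ₀ k = 1)
    (h₁ : ∑ k : A × B, (starRingEnd ℂ) (ψ₁ k) * ψ₁ k = 1)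
    (h : ptrA ψ₀ = ptrA ψ₁) :
    ∃ S ∈ Matrix.unitaryGroup A ℂ, (kronId S).mulVec ψ₀ = ψ₁ :=
  ghjw_purifications_related_by_local_unitary_general ψ₀ ψ₁ h
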